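/- arXiv:2312.12709 — 2 statements merged into one kernel-verified Lean document; each statement's English description precedes it below -/
import Mathlib

section
/- Let φ: K → M be a strong covering of finite abstract simplicial complexes. Then there exists a positive integer k such that for every dimension i with 0 ≤ i ≤ dim K and every i-face G of M, the number of i-faces of K in φ⁻¹(G) equals k. -/
/-!
Write `facesOver K φ G` for the faces of `K` mapped onto `G`. If `G` is a facet of `Gb` in `M`,
restricting each face over `Gb` to the vertices over `G` is a bijection onto the faces over `G`:
it is injective because distinct faces over `Gb` are disjoint, and surjective because the strong
covering property extends every face over `G` to one over `Gb`. Hence the number of faces over a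
face of `M` equals the number over any of its vertices, and the numbers over the two endpoints of
an edge agree. Connectedness of `K` (and surjectivity onto vertices) makes this one number `k`.
A face of `K` over an `i`-face of `M` is itself an `i`-face, as `φ` is injective on faces.
-/

open Finset

variable {V : Type*} {W : Type*}

/-- An abstract simplicial complex: a collection of finite subsets of `V`
closed under taking subsets. -/
def IsComplex [DecidableEq V] (K : Finset (Finset V)) : Prop :=
  ∀ F ∈ K, ∀ G, G ⊆ F → G ∈ K

/-- The 1-skeleton graph of a complex. -/
def oneSkeleton [DecidableEq V] (K : Finset (Finset V)) : SimpleGraph V where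
  Adj u v := u ≠ v ∧ ({u, v} : Finset V) ∈ K
  symm := ⟨fun u v h => ⟨h.1.symm, by rw [Finset.pair_comm]; exact h.2⟩⟩
  loopless := ⟨fun u h => h.1 rfl⟩

/-- A strong covering of simplicial complexes `φ : K → M`:
`K` is a connected complex, `φ` is simplicial, the preimage of each face of `M`
is a disjoint union of faces of `K` each mapped bijectively onto it, and
incidences lift: whenever `G ∈ ∂ Gb` in `M` and `F ∈ φ⁻¹(G)`, there is
`Fb` of `K` with `F ∈ ∂ Fb` and `φ(Fb) = Gb`. -/
structure StrongCovering [DecidableEq V] [DecidableEq W]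
    (K : Finset (Finset V)) (M : Finset (Finset W)) (φ : V → W) : Prop where
  complexK : IsComplex K
  complexM : IsComplex M
  nonemptyK : K.Nonempty
  connectedK : ∀ u v : V, {u} ∈ K → {v} ∈ K → (oneSkeleton K).Reachable u v
  simplicial : ∀ F ∈ K, F.image φ ∈ M
  injOn : ∀ F ∈ K, Set.InjOn φ (F : Set V)
  disjointFibers : ∀ F ∈ K, ∀ F' ∈ K, F.image φ = F'.image φ → F ≠ F' → Disjoint F F'
  surjFaces : ∀ G ∈ M, ∃ F ∈ K, F.image φ = G
  strong : ∀ G ∈ M, ∀ Gb ∈ M, G ⊆ Gb → Gb.card = G.card + 1 →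
    ∀ F ∈ K, F.image φ = G → ∃ Fb ∈ K, F ⊆ Fb ∧ Fb.card = F.card + 1 ∧ Fb.image φ = Gb

def facesOver [DecidableEq W] (K : Finset (Finset V)) (φ : V → W) (G : Finset W) :
    Finset (Finset V) :=
  K.filter fun F => F.image φ = G

lemma mem_facesOver [DecidableEq W] {K : Finset (Finset V)} {φ : V → W} {G : Finset W}
    {F : Finset V} : F ∈ facesOver K φ G ↔ F ∈ K ∧ F.image φ = G :=
  mem_filter

lemma image_filter_mem_eq_of_subset [DecidableEq W] {φ : V → W} {F : Finset V} {G Gb : Finset W}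
    (hF : F.image φ = Gb) (hG : G ⊆ Gb) :
    (F.filter fun v => φ v ∈ G).image φ = G := by
  rw [← filter_image (p := (· ∈ G)), hF, filter_mem_eq_inter, inter_eq_right.mpr hG]

namespace StrongCovering

variable [DecidableEq V] [DecidableEq W]
variable {K : Finset (Finset V)} {M : Finset (Finset W)} {φ : V → W}

lemma card_image (hc : StrongCovering K M φ) {F : Finset V} (hF : F ∈ K) :
    (F.image φ).card = F.card :=
  card_image_of_injOn (hc.injOn F hF)

lemma card_facesOver_pos (hc : StrongCovering K M φ) {G : Finset W} (hG : G ∈ M) :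
    0 < (facesOver K φ G).card := by
  obtain ⟨F, hF, hFG⟩ := hc.surjFaces G hG
  exact card_pos.mpr ⟨F, mem_facesOver.mpr ⟨hF, hFG⟩⟩

lemma card_facesOver_eq_of_facet (hc : StrongCovering K M φ) {G Gb : Finset W}
    (hG : G ∈ M) (hGb : Gb ∈ M) (hsub : G ⊆ Gb) (hcard : Gb.card = G.card + 1)
    (hne : G.Nonempty) :
    (facesOver K φ Gb).card = (facesOver K φ G).card := by
  refine card_bij (fun F _ => F.filter fun v => φ v ∈ G) ?_ ?_ ?_
  · intro F hF
    obtain ⟨hFK, hFGb⟩ := mem_facesOver.mp hF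
    exact mem_facesOver.mpr
      ⟨hc.complexK F hFK _ (filter_subset _ _), image_filter_mem_eq_of_subset hFGb hsub⟩
  · intro F₁ hF₁ F₂ hF₂ hrestrict
    obtain ⟨hF₁K, hF₁Gb⟩ := mem_facesOver.mp hF₁
    obtain ⟨hF₂K, hF₂Gb⟩ := mem_facesOver.mp hF₂
    by_contra hne'
    have hdisj := (hc.disjointFibers F₁ hF₁K F₂ hF₂K (hF₁Gb.trans hF₂Gb.symm) hne').mono
      (filter_subset (fun v => φ v ∈ G) F₁) (hrestrict ▸ filter_subset (fun v => φ v ∈ G) F₂)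
    have hrestrict_ne : (F₁.filter fun v => φ v ∈ G).Nonempty := by
      rw [← image_nonempty (f := φ), image_filter_mem_eq_of_subset hF₁Gb hsub]
      exact hne
    exact hrestrict_ne.ne_empty (disjoint_self.mp hdisj)
  · intro F hF
    obtain ⟨hFK, hFG⟩ := mem_facesOver.mp hF
    obtain ⟨Fb, hFbK, hFFb, -, hFbGb⟩ := hc.strong G hG Gb hGb hsub hcard F hFK hFG
    refine ⟨Fb, mem_facesOver.mpr ⟨hFbK, hFbGb⟩, ?_⟩
    have hFsub : F ⊆ Fb.filter fun v => φ v ∈ G := fun v hv =>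
      mem_filter.mpr ⟨hFFb hv, hFG ▸ mem_image_of_mem φ hv⟩
    have hrestrictK : (Fb.filter fun v => φ v ∈ G) ∈ K := hc.complexK Fb hFbK _ (filter_subset _ _)
    refine (eq_of_subset_of_card_le hFsub ?_).symm
    rw [← hc.card_image hrestrictK, image_filter_mem_eq_of_subset hFbGb hsub, ← hFG,
      hc.card_image hFK]

lemma card_facesOver_eq_singleton (hc : StrongCovering K M φ) {G : Finset W} (hG : G ∈ M)
    {w : W} (hw : w ∈ G) :
    (facesOver K φ G).card = (facesOver K φ {w}).card := by
  induction G using Finset.strongInduction with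
  | H G ih =>
    by_cases hle : G.card ≤ 1
    · rw [eq_singleton_iff_unique_mem.mpr ⟨hw, fun x hx => card_le_one.mp hle x hx w hw⟩]
    obtain ⟨x, hx, hxw⟩ := exists_mem_ne (not_le.mp hle) w
    have hssub : G.erase x ⊂ G := erase_ssubset hx
    have hG' : G.erase x ∈ M := hc.complexM G hG _ hssub.subset
    have hw' : w ∈ G.erase x := mem_erase.mpr ⟨hxw.symm, hw⟩
    rw [hc.card_facesOver_eq_of_facet hG' hG hssub.subset
      (card_erase_add_one hx).symm ⟨w, hw'⟩]
    exact ih _ hssub hG' hw'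

lemma card_facesOver_singleton_eq_of_adj (hc : StrongCovering K M φ) {a b : V}
    (hab : (oneSkeleton K).Adj a b) :
    (facesOver K φ {φ a}).card = (facesOver K φ {φ b}).card := by
  have hedge : ({φ a, φ b} : Finset W) ∈ M := by
    simpa [image_insert] using hc.simplicial _ hab.2
  rw [← hc.card_facesOver_eq_singleton hedge (mem_insert_self _ _),
    hc.card_facesOver_eq_singleton hedge (mem_insert_of_mem (mem_singleton_self _))]

lemma exists_vertex_over (hc : StrongCovering K M φ) {w : W} (hw : {w} ∈ M) :
    ∃ u, {u} ∈ K ∧ φ u = w := by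
  obtain ⟨F, hF, hFw⟩ := hc.surjFaces _ hw
  obtain ⟨u, hu, hφu⟩ := mem_image.mp (hFw ▸ mem_singleton_self w)
  exact ⟨u, hc.complexK F hF _ (singleton_subset_iff.mpr hu), hφu⟩

lemma card_facesOver_singleton_eq (hc : StrongCovering K M φ) {w w' : W}
    (hw : {w} ∈ M) (hw' : {w'} ∈ M) :
    (facesOver K φ {w}).card = (facesOver K φ {w'}).card := by
  obtain ⟨u, hu, rfl⟩ := hc.exists_vertex_over hw
  obtain ⟨u', hu', rfl⟩ := hc.exists_vertex_over hw'
  have hreach := (SimpleGraph.reachable_iff_reflTransGen u u').mp (hc.connectedK u u' hu hu')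
  clear hw hw' hu hu'
  induction hreach with
  | refl => rfl
  | tail _ hadj ih => exact ih.trans (hc.card_facesOver_singleton_eq_of_adj hadj)

lemma exists_card_facesOver_eq (hc : StrongCovering K M φ) :
    ∃ k, 0 < k ∧ ∀ G ∈ M, G.Nonempty → (facesOver K φ G).card = k := by
  by_cases hvertex : ∃ w, {w} ∈ M
  · obtain ⟨w₀, hw₀⟩ := hvertex
    refine ⟨_, hc.card_facesOver_pos hw₀, fun G hG ⟨w, hw⟩ => ?_⟩
    rw [hc.card_facesOver_eq_singleton hG hw,
      hc.card_facesOver_singleton_eq (hc.complexM G hG _ (singleton_subset_iff.mpr hw)) hw₀]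
  · exact ⟨1, one_pos, fun G hG ⟨w, hw⟩ =>
      (hvertex ⟨w, hc.complexM G hG _ (singleton_subset_iff.mpr hw)⟩).elim⟩

end StrongCovering

/-- a strong covering of finite simplicial complexes has a
well-defined degree: there is a positive integer `k` such that for every
dimension `i` with `i ≤ dim K` and every `i`-face `G` of `M`, the number of
`i`-faces of `K` in `φ⁻¹(G)` equals `k`. -/
theorem strongCovering_exists_degree [DecidableEq V] [DecidableEq W]
    (K : Finset (Finset V)) (M : Finset (Finset W)) (φ : V → W)
    (hc : StrongCovering K M φ) :
    ∃ k : ℕ, 0 < k ∧ ∀ i : ℕ, (∃ F ∈ K, i + 1 ≤ F.card) →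
      ∀ G ∈ M, G.card = i + 1 →
        (K.filter fun F => F.card = i + 1 ∧ F.image φ = G).card = k := by
  obtain ⟨k, hk, hcard⟩ := hc.exists_card_facesOver_eq
  refine ⟨k, hk, fun i _ G hG hGcard => ?_⟩
  have hfaces : (K.filter fun F => F.card = i + 1 ∧ F.image φ = G) = facesOver K φ G := by
    unfold facesOver
    exact filter_congr fun F hF => and_iff_right_of_imp fun hFG => by
      rw [← hc.card_image hF, hFG, hGcard]
  rw [hfaces]
  exact hcard G hG (card_pos.mp (by omega))
end

section
/- Let φ: K → M be a strong covering of finite simplicial complexes such that w_K(F̄)/w_K(F) = w_M(φ(F̄))/w_M(φ(F)) for every incidence F ∈ ∂F̄. If f is in the kernel of the i-up Laplace operator of M, then the lifted cochain f̄, defined by f̄([F]) = f([φ(F)]) · sgn([F], [φ(F)]), is in the kernel of the i-up Laplace operator of K. -/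
open Finset

variable {V : Type*} {W : Type*}

/-- The canonical boundary sign `sgn([F], ∂[Fb])` with respect to the
orientations induced by the linear order on the vertices: it is `(−1)^j` if `F`
is obtained from `Fb` by deleting its `j`-th smallest vertex, and `0` if
`F ∉ ∂ Fb`. -/
def sgnBd [LinearOrder V] (F Fb : Finset V) : ℝ :=
  if F ⊆ Fb ∧ Fb.card = F.card + 1 then
    (-1 : ℝ) ^ (∑ v ∈ Fb \ F, (F.filter (· < v)).card)
  else 0

/-- The matrix of the `i`-up Laplace operator
`L_i^up = W_i⁻¹ D_iᵀ W_{i+1} D_i` of a weighted complex `K`, with rows and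
columns indexed by the `i`-faces of `K`. -/
noncomputable def lapUp [Fintype V] [LinearOrder V]
    (K : Finset (Finset V)) (w : Finset V → ℝ) (i : ℕ) :
    Matrix {F : Finset V // F ∈ K ∧ F.card = i + 1}
      {F : Finset V // F ∈ K ∧ F.card = i + 1} ℝ :=
  fun F F' => (w F.1)⁻¹ *
    ∑ Fb : {B : Finset V // B ∈ K ∧ B.card = i + 2},
      w Fb.1 * sgnBd F.1 Fb.1 * sgnBd F'.1 Fb.1

/-- The matrix of the `i`-up Laplace operator of an incidence-signed complex
`(K, s)`: `L_i^up(K,s) = W_i⁻¹ (D_i^s)ᵀ W_{i+1} D_i^s` where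
`(D_i^s)_{Fb,F} = sgn([F], ∂[Fb]) s(F, Fb)`. -/
noncomputable def lapUpSigned [Fintype V] [LinearOrder V]
    (K : Finset (Finset V)) (w : Finset V → ℝ)
    (s : Finset V → Finset V → ℝ) (i : ℕ) :
    Matrix {F : Finset V // F ∈ K ∧ F.card = i + 1}
      {F : Finset V // F ∈ K ∧ F.card = i + 1} ℝ :=
  fun F F' => (w F.1)⁻¹ *
    ∑ Fb : {B : Finset V // B ∈ K ∧ B.card = i + 2},
      w Fb.1 * (sgnBd F.1 Fb.1 * s F.1 Fb.1) * (sgnBd F'.1 Fb.1 * s F'.1 Fb.1)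

/-- The matrix of the `i`-down Laplace operator
`L_i^down = D_{i-1} W_{i-1}⁻¹ D_{i-1}ᵀ W_i` of a weighted complex `K`
(the `(i-1)`-faces have cardinality `i`; for `i = 0` this is the empty
simplex, giving the augmented/reduced version). -/
noncomputable def lapDown [Fintype V] [LinearOrder V]
    (K : Finset (Finset V)) (w : Finset V → ℝ) (i : ℕ) :
    Matrix {F : Finset V // F ∈ K ∧ F.card = i + 1}
      {F : Finset V // F ∈ K ∧ F.card = i + 1} ℝ :=
  fun F F' =>
    (∑ H : {H : Finset V // H ∈ K ∧ H.card = i},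
      sgnBd H.1 F.1 * (w H.1)⁻¹ * sgnBd H.1 F'.1) * w F'.1

/-- The sign `sgn([F], [φ(F)])` comparing the canonical orientation of a face
`F` with the orientation its image `φ(F)` inherits from `φ`: it is the sign of
the permutation sorting the `φ`-image of the sorted vertex list of `F`,
computed as the parity of the number of inversions. -/
def sgnMap {W : Type*} [LinearOrder V] [LinearOrder W] (φ : V → W) (F : Finset V) : ℝ :=
  (-1 : ℝ) ^ ((F ×ˢ F).filter fun p => p.1 < p.2 ∧ φ p.2 < φ p.1).card

/-!
Around a face `F` of `K`, a strong covering is a bijection from the cofaces of `F` onto those of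
`φ(F)`, and from the faces of each coface `Fb` onto those of `φ(Fb)`. Since
`sgn([φF], ∂[φFb]) = sgn([F], ∂[Fb]) sgn([F], [φF]) sgn([Fb], [φFb])`, the coboundary of the
lifted cochain `f̄` is the lift of the coboundary of `f`; with the compatible weights, the
up-Laplacian of `f̄` at `F` is then `w_K(F) sgn([F], [φF]) / w_M(φF)` times that of `f` at `φ(F)`,
which vanishes.
-/

lemma Finset.pow_card_filter_eq_prod_ite {ι M : Type*} [CommMonoid M] (s : Finset ι) (p : ι → Prop)
    [DecidablePred p] (a : M) : a ^ #{u ∈ s | p u} = ∏ u ∈ s, if p u then a else 1 := by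
  simp [prod_ite]

section Signs

variable [LinearOrder V] [LinearOrder W]

lemma sgnBd_eq_zero {F Fb : Finset V} (h : ¬(F ⊆ Fb ∧ Fb.card = F.card + 1)) : sgnBd F Fb = 0 :=
  if_neg h

lemma sgnMap_mul_self (φ : V → W) (F : Finset V) : sgnMap φ F * sgnMap φ F = 1 := by
  rw [sgnMap, ← pow_add, ← two_mul, pow_mul]
  norm_num

lemma sgnBd_insert {F : Finset V} {v : V} (hv : v ∉ F) :
    sgnBd F (insert v F) = (-1) ^ #{u ∈ F | u < v} := by
  rw [sgnBd, if_pos ⟨subset_insert v F, card_insert_of_notMem hv⟩, insert_sdiff_cancel hv,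
    sum_singleton]

lemma sgnMap_insert (φ : V → W) {F : Finset V} {v : V} (hv : v ∉ F) :
    sgnMap φ (insert v F) =
      sgnMap φ F * (-1) ^ (#{u ∈ F | u < v ∧ φ v < φ u} + #{u ∈ F | v < u ∧ φ u < φ v}) := by
  rw [sgnMap, sgnMap, ← pow_add]
  congr 1
  rw [card_filter, sum_product, sum_insert hv]
  simp only [sum_insert hv, sum_add_distrib]
  rw [card_filter, sum_product, card_filter, card_filter]
  simp only [lt_self_iff_false, and_self, ↓reduceIte, sum_boole, Nat.cast_id, zero_add]
  ring

lemma sgnBd_image_insert {φ : V → W} {F : Finset V} {v : V} (hv : v ∉ F)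
    (hinj : Set.InjOn φ (insert v F : Finset V)) :
    sgnBd (F.image φ) (insert (φ v) (F.image φ)) =
      sgnBd F (insert v F) * sgnMap φ F * sgnMap φ (insert v F) := by
  have hφv : φ v ∉ F.image φ := by
    intro h
    obtain ⟨u, hu, huv⟩ := mem_image.1 h
    exact hv (hinj (by simp [hu]) (by simp) huv ▸ hu)
  have hne : ∀ u ∈ F, u ≠ v ∧ φ u ≠ φ v := fun u hu =>
    ⟨ne_of_mem_of_not_mem hu hv, fun h => hφv (h ▸ mem_image_of_mem φ hu)⟩
  have hcard : #{w ∈ F.image φ | w < φ v} = #{u ∈ F | φ u < φ v} := by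
    rw [filter_image, card_image_of_injOn (hinj.mono
      (coe_subset.2 ((filter_subset _ _).trans (subset_insert v F))))]
  rw [sgnBd_insert hφv, sgnBd_insert hv, hcard, sgnMap_insert φ hv, pow_add,
    show ∀ a b s : ℝ, a * s * (s * b) = a * b * (s * s) by intros; ring, sgnMap_mul_self, mul_one]
  -- The parity identity holds vertex by vertex: `u < v` plus "`(u, v)` is an inversion of `φ`"
  -- is congruent to `φ u < φ v` modulo 2.
  simp only [pow_card_filter_eq_prod_ite, ← prod_mul_distrib]
  refine prod_congr rfl fun u hu => ?_
  obtain ⟨huv, hφuv⟩ := hne u hu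
  rcases huv.lt_or_gt with h | h <;> rcases hφuv.lt_or_gt with h' | h' <;>
    simp [h, h', h.not_gt, h'.not_gt]

lemma sgnBd_image {φ : V → W} {F Fb : Finset V} (hinj : Set.InjOn φ Fb) (hsub : F ⊆ Fb) :
    sgnBd (F.image φ) (Fb.image φ) = sgnBd F Fb * sgnMap φ F * sgnMap φ Fb := by
  by_cases hcard : Fb.card = F.card + 1
  · obtain ⟨v, hv, rfl⟩ := exists_eq_insert_iff.2 ⟨hsub, hcard.symm⟩
    rw [image_insert, sgnBd_image_insert hv hinj]
  · have hcard' : ¬(Fb.image φ).card = (F.image φ).card + 1 := by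
      rwa [card_image_of_injOn hinj, card_image_of_injOn (hinj.mono (coe_subset.2 hsub))]
    simp [sgnBd, hcard, hcard']

end Signs

def cofaces [DecidableEq V] (K : Finset (Finset V)) (F : Finset V) : Finset (Finset V) :=
  {Fb ∈ K | F ⊆ Fb ∧ Fb.card = F.card + 1}

section Sums

variable [LinearOrder V] [LinearOrder W]

-- Summing over all subsets of `Fb` is harmless: `sgnBd F Fb` vanishes unless `F` is a facet.
def coboundary (h : Finset V → ℝ) (Fb : Finset V) : ℝ :=
  ∑ F ∈ Fb.powerset, sgnBd F Fb * h F

lemma sum_sgnBd_mul_eq_coboundary {K : Finset (Finset V)} (hK : IsComplex K) {Fb : Finset V}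
    (hFb : Fb ∈ K) {n : ℕ} (hn : Fb.card = n + 1) (h : Finset V → ℝ) :
    ∑ F ∈ K with F.card = n, sgnBd F Fb * h F = coboundary h Fb := by
  have hfacets : ∀ F ∈ Fb.powerset, F ∉ Fb.powersetCard n → sgnBd F Fb * h F = 0 :=
    fun F _ hF => by rw [sgnBd_eq_zero fun hinc => hF (mem_powersetCard.2 ⟨hinc.1, by omega⟩),
      zero_mul]
  rw [coboundary, ← sum_subset (fun F hF => mem_powerset.2 (mem_powersetCard.1 hF).1) hfacets]
  refine (sum_subset (fun F hF => ?_) fun F hF hF' => ?_).symm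
  · obtain ⟨hsub, hcard⟩ := mem_powersetCard.1 hF
    exact mem_filter.2 ⟨hK Fb hFb F hsub, hcard⟩
  · rw [sgnBd_eq_zero fun hinc => hF' (mem_powersetCard.2 ⟨hinc.1, by simp_all⟩), zero_mul]

lemma sum_sum_sgnBd_eq_sum_cofaces {K : Finset (Finset V)} (hK : IsComplex K) {F : Finset V}
    {i : ℕ} (hF : F.card = i + 1) (w h : Finset V → ℝ) :
    ∑ Fb ∈ K with Fb.card = i + 2, ∑ F' ∈ K with F'.card = i + 1,
        w Fb * sgnBd F Fb * sgnBd F' Fb * h F' =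
      ∑ Fb ∈ cofaces K F, w Fb * sgnBd F Fb * coboundary h Fb := by
  have hsub : cofaces K F ⊆ {Fb ∈ K | Fb.card = i + 2} := fun Fb hFb => by
    obtain ⟨hFbK, -, hcard⟩ := mem_filter.1 hFb
    exact mem_filter.2 ⟨hFbK, by omega⟩
  rw [sum_subset hsub fun Fb _ hFb => by
    rw [sgnBd_eq_zero fun hinc => hFb (mem_filter.2 ⟨by simp_all, hinc⟩), mul_zero, zero_mul]]
  refine sum_congr rfl fun Fb hFb => ?_
  obtain ⟨hFbK, hcard⟩ := mem_filter.1 hFb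
  rw [← sum_sgnBd_mul_eq_coboundary hK hFbK hcard, mul_sum]
  exact sum_congr rfl fun F' _ => by ring

lemma coboundary_lift {φ : V → W} {Fb : Finset V} (hinj : Set.InjOn φ Fb) (f : Finset W → ℝ) :
    coboundary (fun F => f (F.image φ) * sgnMap φ F) Fb =
      sgnMap φ Fb * coboundary f (Fb.image φ) := by
  rw [coboundary, coboundary, powerset_image, sum_image (image_injOn_powerset_of_injOn hinj),
    mul_sum]
  refine sum_congr rfl fun F hF => ?_
  rw [sgnBd_image hinj (mem_powerset.1 hF)]
  linear_combination -(sgnBd F Fb * sgnMap φ F * f (F.image φ)) * sgnMap_mul_self φ Fb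

end Sums

namespace StrongCovering

variable {K : Finset (Finset V)} {M : Finset (Finset W)} {φ : V → W}

section DecidableEq

variable [DecidableEq V] [DecidableEq W]

lemma image_cofaces (hc : StrongCovering K M φ) {F : Finset V} (hF : F ∈ K) :
    (cofaces K F).image (image φ) = cofaces M (F.image φ) := by
  ext Gb
  simp only [cofaces, mem_image, mem_filter]
  constructor
  · rintro ⟨Fb, ⟨hFbK, hsub, hcard⟩, rfl⟩
    refine ⟨hc.simplicial Fb hFbK, image_subset_image hsub, ?_⟩
    rw [card_image_of_injOn (hc.injOn Fb hFbK), card_image_of_injOn (hc.injOn F hF), hcard]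
  · rintro ⟨hGbM, hsub, hcard⟩
    obtain ⟨Fb, hFbK, hFsub, hFcard, rfl⟩ :=
      hc.strong _ (hc.simplicial F hF) Gb hGbM hsub hcard F hF rfl
    exact ⟨Fb, ⟨hFbK, hFsub, hFcard⟩, rfl⟩

lemma injOn_image_cofaces (hc : StrongCovering K M φ) {F : Finset V} (hF : F.Nonempty) :
    Set.InjOn (image φ) (cofaces K F : Set (Finset V)) := by
  intro Fb₁ h₁ Fb₂ h₂ himage
  obtain ⟨hK₁, hsub₁, -⟩ := mem_filter.1 h₁
  obtain ⟨hK₂, hsub₂, -⟩ := mem_filter.1 h₂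
  by_contra hne
  obtain ⟨v, hv⟩ := hF
  exact disjoint_left.1 (hc.disjointFibers Fb₁ hK₁ Fb₂ hK₂ himage hne) (hsub₁ hv) (hsub₂ hv)

end DecidableEq

lemma sum_cofaces_coboundary_lift [LinearOrder V] [LinearOrder W] (hc : StrongCovering K M φ)
    {wK : Finset V → ℝ} {wM : Finset W → ℝ} (hwM : ∀ G ∈ M, wM G ≠ 0)
    (hw : ∀ F ∈ K, ∀ Fb ∈ K, F ⊆ Fb → Fb.card = F.card + 1 →
      wK Fb / wK F = wM (Fb.image φ) / wM (F.image φ))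
    {F : Finset V} (hF : F ∈ K) (hFne : F.Nonempty) (f : Finset W → ℝ) :
    ∑ Fb ∈ cofaces K F,
        wK Fb * sgnBd F Fb * coboundary (fun F' => f (F'.image φ) * sgnMap φ F') Fb =
      wK F * sgnMap φ F / wM (F.image φ) *
        ∑ Gb ∈ cofaces M (F.image φ), wM Gb * sgnBd (F.image φ) Gb * coboundary f Gb := by
  rw [← hc.image_cofaces hF, sum_image (hc.injOn_image_cofaces hFne), mul_sum]
  refine sum_congr rfl fun Fb hFb => ?_
  obtain ⟨hFbK, hsub, hcard⟩ := mem_filter.1 hFb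
  have hinj := hc.injOn Fb hFbK
  have hwG := hwM _ (hc.simplicial F hF)
  have hwGb := hwM _ (hc.simplicial Fb hFbK)
  have hratio := hw F hF Fb hFbK hsub hcard
  -- `wK F ≠ 0` is forced: otherwise the ratio `wK Fb / wK F` would be the junk value `0`.
  have hwF : wK F ≠ 0 := fun h0 => div_ne_zero hwGb hwG (by rw [← hratio, h0, div_zero])
  have hcross := mul_eq_mul_of_div_eq_div _ _ hwF hwG hratio
  rw [coboundary_lift hinj, sgnBd_image hinj hsub]
  field_simp
  linear_combination (sgnBd F Fb * sgnMap φ Fb * coboundary f (Fb.image φ)) *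
    (hcross - wM (Fb.image φ) * wK F * sgnMap_mul_self φ F)

end StrongCovering

theorem lift_kernel_up_laplacian_general [LinearOrder V]
    [LinearOrder W]
    (K : Finset (Finset V)) (M : Finset (Finset W)) (φ : V → W)
    (hc : StrongCovering K M φ)
    (wK : Finset V → ℝ) (wM : Finset W → ℝ)
    (hwM : ∀ G ∈ M, 0 < wM G)
    (hw : ∀ F ∈ K, ∀ Fb ∈ K, F ⊆ Fb → Fb.card = F.card + 1 →
      wK Fb / wK F = wM (Fb.image φ) / wM (F.image φ))
    (i : ℕ) (f : Finset W → ℝ)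
    (hf : ∀ G ∈ M, G.card = i + 1 →
      (wM G)⁻¹ * ∑ Gb ∈ M.filter (fun X => X.card = i + 2),
        ∑ G' ∈ M.filter (fun X => X.card = i + 1),
          wM Gb * sgnBd G Gb * sgnBd G' Gb * f G' = 0) :
    ∀ F ∈ K, F.card = i + 1 →
      (wK F)⁻¹ * ∑ Fb ∈ K.filter (fun X => X.card = i + 2),
        ∑ F' ∈ K.filter (fun X => X.card = i + 1),
          wK Fb * sgnBd F Fb * sgnBd F' Fb * (f (F'.image φ) * sgnMap φ F') = 0 := by
  intro F hF hFcard
  have hwM' : ∀ G ∈ M, wM G ≠ 0 := fun G hG => (hwM G hG).ne'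
  have hGM := hc.simplicial F hF
  have hGcard : (F.image φ).card = i + 1 := by rw [card_image_of_injOn (hc.injOn F hF), hFcard]
  have hM : ∑ Gb ∈ cofaces M (F.image φ), wM Gb * sgnBd (F.image φ) Gb * coboundary f Gb = 0 := by
    simpa [sum_sum_sgnBd_eq_sum_cofaces hc.complexM hGcard, hwM' _ hGM] using hf _ hGM hGcard
  rw [sum_sum_sgnBd_eq_sum_cofaces hc.complexK hFcard,
    hc.sum_cofaces_coboundary_lift hwM' hw hF (card_pos.1 (by omega)), hM, mul_zero, mul_zero]

/-- for a strong covering `φ : K → M` whose weights satisfy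
`w_K(Fb)/w_K(F) = w_M(φ(Fb))/w_M(φ(F))` on incidences, the sign-twisted lift
`f̄([F]) = f([φ(F)]) sgn([F],[φ(F)])` of any cochain `f` in the kernel of
`L_i^up(M)` lies in the kernel of `L_i^up(K)`. -/
theorem lift_kernel_up_laplacian [Fintype V] [LinearOrder V]
    [Fintype W] [LinearOrder W]
    (K : Finset (Finset V)) (M : Finset (Finset W)) (φ : V → W)
    (hc : StrongCovering K M φ)
    (wK : Finset V → ℝ) (wM : Finset W → ℝ)
    (hwK : ∀ F ∈ K, 0 < wK F) (hwM : ∀ G ∈ M, 0 < wM G)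
    (hw : ∀ F ∈ K, ∀ Fb ∈ K, F ⊆ Fb → Fb.card = F.card + 1 →
      wK Fb / wK F = wM (Fb.image φ) / wM (F.image φ))
    (i : ℕ) (f : Finset W → ℝ)
    (hf : ∀ G ∈ M, G.card = i + 1 →
      (wM G)⁻¹ * ∑ Gb ∈ M.filter (fun X => X.card = i + 2),
        ∑ G' ∈ M.filter (fun X => X.card = i + 1),
          wM Gb * sgnBd G Gb * sgnBd G' Gb * f G' = 0) :
    ∀ F ∈ K, F.card = i + 1 →
      (wK F)⁻¹ * ∑ Fb ∈ K.filter (fun X => X.card = i + 2),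
        ∑ F' ∈ K.filter (fun X => X.card = i + 1),
          wK Fb * sgnBd F Fb * sgnBd F' Fb * (f (F'.image φ) * sgnMap φ F') = 0 :=
  lift_kernel_up_laplacian_general K M φ hc wK wM hwM hw i f hf
end
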